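/- Let Y be a nonnegative random variable with E[Y] > 0 and E[Y²] < ∞, with survival function S_Y(y) = P(Y > y); let n > 0, λ > 0, θ ≥ 0, η > 0, and let c satisfy λE[Y] < c < (1+θ)λE[Y] + (η/2)λE[Y²]. For ρ > 0 and t ≥ 0, define Ř(t; ρ) = t if 0 ≤ t ≤ (√n/ρ) ln(1 + θ/√n), and otherwise let Ř(t; ρ) be the unique solution r ∈ [0, t) of (√n + θ) + η(t − r) = √n e^{ρ r/√n}. Then there exists a unique ρ > 0 solving c − λE[Y] = √n λ ∫₀^∞ (e^{ρ Ř(t;ρ)/√n} − 1) S_Y(t) dt. -/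

import Mathlib

/-!
Write `s = √n` and `r = Ř(t; ρ)`. The retention is characterised by `0 ≤ r ≤ t` and
`s e^{ρr/s} ≤ s + θ + η(t - r)`, with equality when `r < t`. Comparing two such retentions shows
that for `t > 0` the retention `r` decreases while `ρ r` strictly increases in `ρ`; hence
`e^{ρr/s}` is continuous and strictly increasing in `ρ`, tends to `1` as `ρ → 0⁺` and to
`1 + (θ + ηt)/s` as `ρ → ∞`. This limit dominates the integrand and is integrable against the
tail `S_Y`, because `∫ S_Y = E[Y]` and `∫ t S_Y(t) dt = E[Y²]/2`. By dominated convergence the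
right-hand side of the equation is continuous and strictly increasing in `ρ`, running from `0` to
`λ(θ E[Y] + η E[Y²]/2)`, and the bounds on `c` put `c - λE[Y]` strictly in between.
-/

open MeasureTheory Real Filter Set Topology

theorem continuousOn_Ioi_of_antitoneOn_of_monotoneOn_mul {f : ℝ → ℝ}
    (hf : AntitoneOn f (Ioi 0)) (hg : MonotoneOn (fun x => x * f x) (Ioi 0)) :
    ContinuousOn f (Ioi 0) := by
  intro x₀ hx₀
  refine ContinuousAt.continuousWithinAt ?_
  have hlim : Tendsto (fun x => x₀ * f x₀ / x) (𝓝 x₀) (𝓝 (f x₀)) := by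
    have := (tendsto_const_nhds (x := x₀ * f x₀)).div (tendsto_id (x := 𝓝 x₀)) hx₀.ne'
    rwa [mul_div_cancel_left₀ _ hx₀.ne'] at this
  have hmin := (tendsto_const_nhds (x := f x₀)).min hlim
  have hmax := (tendsto_const_nhds (x := f x₀)).max hlim
  rw [min_self] at hmin
  rw [max_self] at hmax
  -- `f x` lies between `f x₀` and `x₀ f x₀ / x`, which both tend to `f x₀`.
  refine tendsto_of_tendsto_of_tendsto_of_le_of_le' hmin hmax ?_ ?_ <;>
    filter_upwards [Ioi_mem_nhds hx₀] with x hx <;>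
    have hx' : 0 < x := hx <;>
    rcases le_total x₀ x with hle | hle
  · exact min_le_of_right_le ((div_le_iff₀ hx').2 (by linarith [hg hx₀ hx hle]))
  · exact min_le_of_left_le (hf hx hx₀ hle)
  · exact le_max_of_le_left (hf hx₀ hx hle)
  · exact le_max_of_le_right ((le_div_iff₀ hx').2 (by linarith [hg hx hx₀ hle]))

theorem existsUnique_pos_eq_of_strictMonoOn {f : ℝ → ℝ} {a b d : ℝ}
    (hf : StrictMonoOn f (Ioi 0)) (hc : ContinuousOn f (Ioi 0))
    (h₀ : Tendsto f (𝓝[>] 0) (𝓝 a)) (h_top : Tendsto f atTop (𝓝 b)) (had : a < d)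
    (hdb : d < b) : ∃! x, 0 < x ∧ f x = d := by
  obtain ⟨x₁, hx₁, hfx₁⟩ := ((h₀.eventually_lt_const had).and self_mem_nhdsWithin).exists
  obtain ⟨x₂, hfx₂, hx₂⟩ :=
    ((h_top.eventually_const_lt hdb).and (eventually_gt_atTop x₁)).exists
  have hsub : Icc x₁ x₂ ⊆ Ioi 0 := fun x hx => lt_of_lt_of_le hfx₁ hx.1
  obtain ⟨x, hx, hfx⟩ := intermediate_value_Icc hx₂.le (hc.mono hsub) ⟨hx₁.le, hfx₂.le⟩
  exact ⟨x, ⟨hsub hx, hfx⟩, fun y hy => hf.injOn hy.1 (hsub hx) (hy.2.trans hfx.symm)⟩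

section Tail

variable {α : Type*} [MeasurableSpace α] {μ : Measure α} {X : α → ℝ}

theorem integrable_and_integral_eq_of_lintegral_ofReal_eq {f : α → ℝ} {a : ℝ}
    (hf : AEStronglyMeasurable f μ) (hf_nn : 0 ≤ᵐ[μ] f) (ha : 0 ≤ a)
    (h : ∫⁻ x, ENNReal.ofReal (f x) ∂μ = ENNReal.ofReal a) :
    Integrable f μ ∧ ∫ x, f x ∂μ = a :=
  ⟨⟨hf, (hasFiniteIntegral_iff_ofReal hf_nn).2 (h ▸ ENNReal.ofReal_lt_top)⟩, by
    rw [integral_eq_lintegral_of_nonneg_ae hf_nn hf, h, ENNReal.toReal_ofReal ha]⟩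

theorem measurable_measureReal_lt : Measurable fun t => μ.real {x | t < X x} :=
  Measurable.ennreal_toReal (f := fun t => μ {x | t < X x})
    (Antitone.measurable fun _ _ hst => measure_mono fun _ h => lt_of_le_of_lt hst h)

variable [IsFiniteMeasure μ]

theorem integrableOn_measureReal_lt_and_integral_eq (hX : Measurable X) (hX_nn : 0 ≤ X)
    (hXi : Integrable X μ) :
    IntegrableOn (fun t => μ.real {x | t < X x}) (Ioi 0) ∧
      ∫ t in Ioi 0, μ.real {x | t < X x} = ∫ x, X x ∂μ := by
  refine integrable_and_integral_eq_of_lintegral_ofReal_eq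
    measurable_measureReal_lt.aestronglyMeasurable (ae_of_all _ fun _ => measureReal_nonneg)
    (integral_nonneg hX_nn) ?_
  simp_rw [Measure.real, ENNReal.ofReal_toReal (measure_ne_top μ _)]
  rw [← lintegral_eq_lintegral_meas_lt μ (ae_of_all _ hX_nn) hX.aemeasurable,
    ofReal_integral_eq_lintegral_ofReal hXi (ae_of_all _ hX_nn)]

theorem integrableOn_mul_measureReal_lt_and_integral_eq (hX : Measurable X) (hX_nn : 0 ≤ X)
    (hXi : Integrable (fun x => X x ^ 2) μ) :
    IntegrableOn (fun t => t * μ.real {x | t < X x}) (Ioi 0) ∧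
      ∫ t in Ioi 0, t * μ.real {x | t < X x} = (∫ x, X x ^ 2 ∂μ) / 2 := by
  refine integrable_and_integral_eq_of_lintegral_ofReal_eq
    (measurable_id.mul measurable_measureReal_lt).aestronglyMeasurable ?_
    (div_nonneg (integral_nonneg fun x => sq_nonneg (X x)) zero_le_two) ?_
  · filter_upwards [ae_restrict_mem measurableSet_Ioi] with t (ht : 0 < t)
    exact mul_nonneg ht.le measureReal_nonneg
  have hlayer := lintegral_comp_eq_lintegral_meas_lt_mul μ (ae_of_all _ hX_nn) hX.aemeasurable
    (g := id) (fun _ _ => intervalIntegral.intervalIntegrable_id)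
    (ae_restrict_of_forall_mem measurableSet_Ioi fun t (ht : 0 < t) => ht.le)
  simp only [id, integral_id, ne_eq, OfNat.ofNat_ne_zero, not_false_eq_true, zero_pow,
    sub_zero] at hlayer
  rw [← integral_div, ofReal_integral_eq_lintegral_ofReal (hXi.div_const 2)
    (ae_of_all _ fun x => by positivity), hlayer]
  refine setLIntegral_congr_fun measurableSet_Ioi fun t (ht : 0 < t) => ?_
  rw [ENNReal.ofReal_mul ht.le, Measure.real, ENNReal.ofReal_toReal (measure_ne_top μ _), mul_comm]

end Tail

/-- `r = Ř(t; ρ)` with `s = √n`, in complementarity form: `r` is the full claim `t` below the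
threshold, and otherwise solves the first-order condition `s e^{ρr/s} = s + θ + η(t - r)`. -/
structure IsOptimalRetention (s θ η ρ t r : ℝ) : Prop where
  nonneg : 0 ≤ r
  le : r ≤ t
  exp_le : s * exp (ρ * r / s) ≤ s + θ + η * (t - r)
  exp_eq_of_lt : r < t → s * exp (ρ * r / s) = s + θ + η * (t - r)

namespace IsOptimalRetention

variable {s θ η ρ ρ₁ ρ₂ t t₁ t₂ r r₁ r₂ : ℝ}

theorem of_threshold (hs : 0 < s) (hθ : 0 ≤ θ) (hρ : 0 < ρ) (ht : 0 ≤ t)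
    (h_le : t ≤ s / ρ * log (1 + θ / s) → r = t)
    (h_lt : s / ρ * log (1 + θ / s) < t →
      0 ≤ r ∧ r < t ∧ s + θ + η * (t - r) = s * exp (ρ * r / s)) :
    IsOptimalRetention s θ η ρ t r := by
  rcases le_or_gt t (s / ρ * log (1 + θ / s)) with hT | hT
  · obtain rfl := h_le hT
    have hlog : ρ * r / s ≤ log (1 + θ / s) := by
      rw [div_le_iff₀ hs]
      rw [div_mul_eq_mul_div, le_div_iff₀ hρ] at hT
      linarith
    have hexp := (le_log_iff_exp_le (by positivity)).1 hlog
    refine ⟨ht, le_rfl, ?_, fun h => (lt_irrefl r h).elim⟩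
    calc s * exp (ρ * r / s) ≤ s * (1 + θ / s) := by gcongr
      _ = s + θ + η * (r - r) := by field_simp; ring
  · obtain ⟨h0, hlt, heq⟩ := h_lt hT
    exact ⟨h0, hlt.le, heq.ge, fun _ => heq.symm⟩

theorem pos (h : IsOptimalRetention s θ η ρ t r) (hθ : 0 ≤ θ) (hη : 0 < η) (ht : 0 < t) :
    0 < r := by
  refine h.nonneg.lt_of_ne fun hr => ?_
  have := h.exp_eq_of_lt (hr ▸ ht)
  rw [← hr, mul_zero, zero_div, exp_zero] at this
  nlinarith

theorem exp_le_one_add (h : IsOptimalRetention s θ η ρ t r) (hs : 0 < s) (hη : 0 ≤ η) :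
    exp (ρ * r / s) ≤ 1 + (θ + η * t) / s := by
  rw [← mul_le_mul_iff_of_pos_left hs, mul_add, mul_div_cancel₀ _ hs.ne']
  nlinarith [h.exp_le, h.nonneg]

theorem one_le_exp (h : IsOptimalRetention s θ η ρ t r) (hs : 0 < s) (hρ : 0 ≤ ρ) :
    1 ≤ exp (ρ * r / s) :=
  Real.one_le_exp (by have := h.nonneg; positivity)

theorem mul_lt_mul_of_lt (h₁ : IsOptimalRetention s θ η ρ₁ t₁ r₁)
    (h₂ : IsOptimalRetention s θ η ρ₂ t₂ r₂) (hs : 0 < s) (hη : 0 < η) (ht : t₁ ≤ t₂)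
    (hr : r₂ < r₁) : ρ₁ * r₁ < ρ₂ * r₂ := by
  have hexp : s * exp (ρ₁ * r₁ / s) < s * exp (ρ₂ * r₂ / s) :=
    calc s * exp (ρ₁ * r₁ / s) ≤ s + θ + η * (t₁ - r₁) := h₁.exp_le
      _ < s + θ + η * (t₂ - r₂) := by nlinarith
      _ = s * exp (ρ₂ * r₂ / s) := (h₂.exp_eq_of_lt (hr.trans_le (h₁.le.trans ht))).symm
  rwa [mul_lt_mul_iff_of_pos_left hs, exp_lt_exp, div_lt_div_iff_of_pos_right hs] at hexp

theorem le_of_claim_le (h₁ : IsOptimalRetention s θ η ρ t₁ r₁)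
    (h₂ : IsOptimalRetention s θ η ρ t₂ r₂) (hs : 0 < s) (hη : 0 < η) (hρ : 0 < ρ) (ht : t₁ ≤ t₂) : r₁ ≤ r₂ := by
  by_contra! hr
  nlinarith [h₁.mul_lt_mul_of_lt h₂ hs hη ht hr]

theorem le_of_rate_le (h₁ : IsOptimalRetention s θ η ρ₁ t r₁)
    (h₂ : IsOptimalRetention s θ η ρ₂ t r₂) (hs : 0 < s) (hη : 0 < η) (hρ₁ : 0 ≤ ρ₁)
    (hρ : ρ₁ ≤ ρ₂) : r₂ ≤ r₁ := by
  by_contra! hr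
  nlinarith [h₂.mul_lt_mul_of_lt h₁ hs hη le_rfl hr, h₁.nonneg]

theorem mul_lt_mul_of_rate_lt (h₁ : IsOptimalRetention s θ η ρ₁ t r₁)
    (h₂ : IsOptimalRetention s θ η ρ₂ t r₂) (hs : 0 < s) (hθ : 0 ≤ θ) (hη : 0 < η)
    (ht : 0 < t) (hρ₁ : 0 < ρ₁) (hρ : ρ₁ < ρ₂) : ρ₁ * r₁ < ρ₂ * r₂ := by
  by_contra! hle
  have hr₁ := h₁.pos hθ hη ht
  have hr : r₂ < r₁ := by nlinarith
  exact hle.not_gt (h₁.mul_lt_mul_of_lt h₂ hs hη le_rfl hr)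

end IsOptimalRetention

section RateDependence

variable {s θ η t : ℝ} {R : ℝ → ℝ}

theorem continuousOn_exp_of_isOptimalRetention (hs : 0 < s) (hθ : 0 ≤ θ) (hη : 0 < η)
    (ht : 0 < t) (hR : ∀ ρ, 0 < ρ → IsOptimalRetention s θ η ρ t (R ρ)) :
    ContinuousOn (fun ρ => exp (ρ * R ρ / s)) (Ioi 0) := by
  have hanti : AntitoneOn R (Ioi 0) := fun ρ₁ h₁ ρ₂ h₂ hρ =>
    (hR ρ₁ h₁).le_of_rate_le (hR ρ₂ h₂) hs hη (le_of_lt h₁) hρ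
  have hmono : MonotoneOn (fun ρ => ρ * R ρ) (Ioi 0) := by
    intro ρ₁ h₁ ρ₂ h₂ hρ
    rcases hρ.eq_or_lt with rfl | hlt
    · exact le_rfl
    · exact ((hR ρ₁ h₁).mul_lt_mul_of_rate_lt (hR ρ₂ h₂) hs hθ hη ht h₁ hlt).le
  have hcont := continuousOn_Ioi_of_antitoneOn_of_monotoneOn_mul hanti hmono
  exact (((continuousOn_id.mul hcont).div_const s)).rexp

theorem tendsto_exp_nhdsGT_zero_of_isOptimalRetention
    (hR : ∀ ρ, 0 < ρ → IsOptimalRetention s θ η ρ t (R ρ)) :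
    Tendsto (fun ρ => exp (ρ * R ρ / s)) (𝓝[>] 0) (𝓝 1) := by
  have hup : Tendsto (fun ρ => ρ * t) (𝓝[>] 0) (𝓝 0) := by
    simpa using (tendsto_id.mul_const t).mono_left (nhdsWithin_le_nhds (a := (0 : ℝ)))
  have hmul : Tendsto (fun ρ => ρ * R ρ) (𝓝[>] 0) (𝓝 0) := by
    refine tendsto_of_tendsto_of_tendsto_of_le_of_le' tendsto_const_nhds hup ?_ ?_ <;>
      filter_upwards [self_mem_nhdsWithin] with ρ hρ
    · exact mul_nonneg (le_of_lt hρ) (hR ρ hρ).nonneg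
    · exact mul_le_mul_of_nonneg_left (hR ρ hρ).le (le_of_lt hρ)
  simpa using ((hmul.div_const s).rexp)

theorem tendsto_exp_atTop_of_isOptimalRetention (hs : 0 < s) (hη : 0 < η) (ht : 0 < t)
    (hR : ∀ ρ, 0 < ρ → IsOptimalRetention s θ η ρ t (R ρ)) :
    Tendsto (fun ρ => exp (ρ * R ρ / s)) atTop (𝓝 (1 + (θ + η * t) / s)) := by
  set C := log (1 + (θ + η * t) / s)
  -- The bound `exp (ρ r / s) ≤ 1 + (θ + η t) / s` forces `r ≤ s C / ρ`.
  have hR0 : Tendsto R atTop (𝓝 0) := by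
    refine tendsto_of_tendsto_of_tendsto_of_le_of_le' tendsto_const_nhds
      ((tendsto_const_nhds (x := s * C)).div_atTop tendsto_id) ?_ ?_ <;>
      filter_upwards [eventually_gt_atTop 0] with ρ hρ
    · exact (hR ρ hρ).nonneg
    · have hle := (hR ρ hρ).exp_le_one_add hs hη.le
      have hC := (hR ρ hρ).one_le_exp hs hρ.le
      rw [← le_log_iff_exp_le (by linarith), div_le_iff₀ hs] at hle
      rw [id, le_div_iff₀ hρ]
      linarith
  have hlim :
      Tendsto (fun ρ => 1 + (θ + η * (t - R ρ)) / s) atTop (𝓝 (1 + (θ + η * t) / s)) := by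
    simpa using ((((tendsto_const_nhds (x := t)).sub hR0).const_mul η).const_add θ).div_const s
      |>.const_add 1
  refine hlim.congr' ?_
  filter_upwards [eventually_gt_atTop 0, hR0.eventually (gt_mem_nhds ht)] with ρ hρ hlt
  rw [eq_comm, ← mul_right_inj' hs.ne', (hR ρ hρ).exp_eq_of_lt hlt]
  field_simp
  ring

end RateDependence

section AdjustmentIntegral

variable {s θ η : ℝ} {R : ℝ → ℝ → ℝ} {S : ℝ → ℝ}

/-- For `s = √n` and `S = S_Y`, `√n λ · adjustmentIntegral s Ř S_Y ρ` is the right-hand side of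
the adjustment equation. -/
noncomputable def adjustmentIntegral (s : ℝ) (R : ℝ → ℝ → ℝ) (S : ℝ → ℝ) (ρ : ℝ) : ℝ :=
  ∫ t in Ioi 0, (exp (ρ * R t ρ / s) - 1) * S t

theorem aestronglyMeasurable_adjustmentIntegrand (hs : 0 < s) (hη : 0 < η)
    (hR : ∀ ρ, 0 < ρ → ∀ t, 0 < t → IsOptimalRetention s θ η ρ t (R t ρ)) (hS : Measurable S)
    {ρ : ℝ} (hρ : 0 < ρ) :
    AEStronglyMeasurable (fun t => (exp (ρ * R t ρ / s) - 1) * S t)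
      (volume.restrict (Ioi 0)) := by
  have hmono : MonotoneOn (fun t => R t ρ) (Ioi 0) := fun t₁ h₁ t₂ h₂ ht =>
    (hR ρ hρ t₁ h₁).le_of_claim_le (hR ρ hρ t₂ h₂) hs hη hρ ht
  have hRm := aemeasurable_restrict_of_monotoneOn (μ := volume) measurableSet_Ioi hmono
  exact ((((hRm.const_mul ρ).div_const s).exp.sub_const 1).mul
    hS.aemeasurable).aestronglyMeasurable

theorem norm_adjustmentIntegrand_le (hs : 0 < s) (hη : 0 < η)
    (hR : ∀ ρ, 0 < ρ → ∀ t, 0 < t → IsOptimalRetention s θ η ρ t (R t ρ)) (hS₀ : ∀ t, 0 ≤ S t)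
    {ρ t : ℝ} (hρ : 0 < ρ) (ht : 0 < t) :
    ‖(exp (ρ * R t ρ / s) - 1) * S t‖ ≤ (θ + η * t) / s * S t := by
  have h₁ := (hR ρ hρ t ht).one_le_exp hs hρ.le
  have h₂ := (hR ρ hρ t ht).exp_le_one_add hs hη.le
  rw [Real.norm_of_nonneg (mul_nonneg (by linarith) (hS₀ t))]
  exact mul_le_mul_of_nonneg_right (by linarith) (hS₀ t)

theorem integrableOn_adjustmentBound (hSi : IntegrableOn S (Ioi 0))
    (htSi : IntegrableOn (fun t => t * S t) (Ioi 0)) :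
    IntegrableOn (fun t => (θ + η * t) / s * S t) (Ioi 0) :=
  IntegrableOn.congr_fun (((hSi.const_mul θ).add (htSi.const_mul η)).div_const s)
    (fun t _ => by simp only [Pi.add_apply]; ring) measurableSet_Ioi

theorem integrableOn_adjustmentIntegrand (hs : 0 < s) (hη : 0 < η)
    (hR : ∀ ρ, 0 < ρ → ∀ t, 0 < t → IsOptimalRetention s θ η ρ t (R t ρ)) (hS : Measurable S)
    (hS₀ : ∀ t, 0 ≤ S t) (hSi : IntegrableOn S (Ioi 0))
    (htSi : IntegrableOn (fun t => t * S t) (Ioi 0)) {ρ : ℝ} (hρ : 0 < ρ) :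
    IntegrableOn (fun t => (exp (ρ * R t ρ / s) - 1) * S t) (Ioi 0) :=
  (integrableOn_adjustmentBound hSi htSi).mono'
    (aestronglyMeasurable_adjustmentIntegrand hs hη hR hS hρ)
    (ae_restrict_of_forall_mem measurableSet_Ioi fun _ ht =>
      norm_adjustmentIntegrand_le hs hη hR hS₀ hρ ht)

theorem tendsto_adjustmentIntegral {l : Filter ℝ} [l.IsCountablyGenerated] {g : ℝ → ℝ}
    (hs : 0 < s) (hη : 0 < η)
    (hR : ∀ ρ, 0 < ρ → ∀ t, 0 < t → IsOptimalRetention s θ η ρ t (R t ρ)) (hS : Measurable S)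
    (hS₀ : ∀ t, 0 ≤ S t) (hSi : IntegrableOn S (Ioi 0))
    (htSi : IntegrableOn (fun t => t * S t) (Ioi 0)) (hl : ∀ᶠ ρ in l, 0 < ρ)
    (hg : ∀ t, 0 < t → Tendsto (fun ρ => exp (ρ * R t ρ / s)) l (𝓝 (g t))) :
    Tendsto (adjustmentIntegral s R S) l (𝓝 (∫ t in Ioi 0, (g t - 1) * S t)) := by
  refine tendsto_integral_filter_of_dominated_convergence (fun t => (θ + η * t) / s * S t)
    (hl.mono fun ρ hρ => aestronglyMeasurable_adjustmentIntegrand hs hη hR hS hρ)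
    (hl.mono fun ρ hρ => ae_restrict_of_forall_mem measurableSet_Ioi fun t ht =>
      norm_adjustmentIntegrand_le hs hη hR hS₀ hρ ht) (integrableOn_adjustmentBound hSi htSi)
    (ae_restrict_of_forall_mem measurableSet_Ioi fun t ht =>
      ((hg t ht).sub_const 1).mul_const (S t))

theorem adjustmentIntegral_strictMonoOn (hs : 0 < s) (hθ : 0 ≤ θ) (hη : 0 < η)
    (hR : ∀ ρ, 0 < ρ → ∀ t, 0 < t → IsOptimalRetention s θ η ρ t (R t ρ)) (hS : Measurable S)
    (hS₀ : ∀ t, 0 ≤ S t) (hSi : IntegrableOn S (Ioi 0))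
    (htSi : IntegrableOn (fun t => t * S t) (Ioi 0)) (hS_pos : 0 < ∫ t in Ioi 0, S t) :
    StrictMonoOn (adjustmentIntegral s R S) (Ioi 0) := by
  intro ρ₁ (h₁ : 0 < ρ₁) ρ₂ (h₂ : 0 < ρ₂) hρ
  have hlt : ∀ t, 0 < t → exp (ρ₁ * R t ρ₁ / s) < exp (ρ₂ * R t ρ₂ / s) := fun t ht => by
    rw [exp_lt_exp, div_lt_div_iff_of_pos_right hs]
    exact (hR ρ₁ h₁ t ht).mul_lt_mul_of_rate_lt (hR ρ₂ h₂ t ht) hs hθ hη ht h₁ hρ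
  set D := fun t => (exp (ρ₂ * R t ρ₂ / s) - exp (ρ₁ * R t ρ₁ / s)) * S t
  have hD : adjustmentIntegral s R S ρ₂ - adjustmentIntegral s R S ρ₁ = ∫ t in Ioi 0, D t := by
    rw [adjustmentIntegral, adjustmentIntegral, ← integral_sub
      (integrableOn_adjustmentIntegrand hs hη hR hS hS₀ hSi htSi h₂)
      (integrableOn_adjustmentIntegrand hs hη hR hS hS₀ hSi htSi h₁)]
    congr 1 with t
    ring
  have hD_nn : 0 ≤ᵐ[volume.restrict (Ioi 0)] D :=
    ae_restrict_of_forall_mem measurableSet_Ioi fun t ht =>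
      mul_nonneg (sub_nonneg.2 (hlt t ht).le) (hS₀ t)
  have hDi : IntegrableOn D (Ioi 0) := by
    refine ((integrableOn_adjustmentIntegrand hs hη hR hS hS₀ hSi htSi h₂).sub
      (integrableOn_adjustmentIntegrand hs hη hR hS hS₀ hSi htSi h₁)).congr ?_
    filter_upwards with t
    simp only [Pi.sub_apply, D]
    ring
  -- `D` vanishes exactly where `S` does, and `S` is not a.e. zero.
  have hD_pos : 0 < ∫ t in Ioi 0, D t := by
    refine (integral_nonneg_of_ae hD_nn).lt_of_ne fun h => hS_pos.ne' ?_
    refine integral_eq_zero_of_ae ?_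
    filter_upwards [(integral_eq_zero_iff_of_nonneg_ae hD_nn hDi).1 h.symm,
      ae_restrict_mem measurableSet_Ioi] with t hDt ht
    exact (mul_eq_zero.1 hDt).resolve_left (sub_ne_zero.2 (hlt t ht).ne')
  linarith

theorem adjustmentIntegral_continuousOn (hs : 0 < s) (hθ : 0 ≤ θ) (hη : 0 < η)
    (hR : ∀ ρ, 0 < ρ → ∀ t, 0 < t → IsOptimalRetention s θ η ρ t (R t ρ)) (hS : Measurable S)
    (hS₀ : ∀ t, 0 ≤ S t) (hSi : IntegrableOn S (Ioi 0))
    (htSi : IntegrableOn (fun t => t * S t) (Ioi 0)) :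
    ContinuousOn (adjustmentIntegral s R S) (Ioi 0) := fun ρ hρ =>
  tendsto_adjustmentIntegral (l := 𝓝[Ioi 0] ρ) hs hη hR hS hS₀ hSi htSi self_mem_nhdsWithin
    fun t ht => continuousOn_exp_of_isOptimalRetention hs hθ hη ht (fun ρ hρ => hR ρ hρ t ht) ρ hρ

theorem tendsto_adjustmentIntegral_nhdsGT_zero (hs : 0 < s) (hη : 0 < η)
    (hR : ∀ ρ, 0 < ρ → ∀ t, 0 < t → IsOptimalRetention s θ η ρ t (R t ρ)) (hS : Measurable S)
    (hS₀ : ∀ t, 0 ≤ S t) (hSi : IntegrableOn S (Ioi 0))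
    (htSi : IntegrableOn (fun t => t * S t) (Ioi 0)) :
    Tendsto (adjustmentIntegral s R S) (𝓝[>] 0) (𝓝 0) := by
  simpa using tendsto_adjustmentIntegral (l := 𝓝[>] 0) hs hη hR hS hS₀ hSi htSi
    self_mem_nhdsWithin fun t ht =>
      tendsto_exp_nhdsGT_zero_of_isOptimalRetention fun ρ hρ => hR ρ hρ t ht

theorem tendsto_adjustmentIntegral_atTop (hs : 0 < s) (hη : 0 < η)
    (hR : ∀ ρ, 0 < ρ → ∀ t, 0 < t → IsOptimalRetention s θ η ρ t (R t ρ)) (hS : Measurable S)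
    (hS₀ : ∀ t, 0 ≤ S t) (hSi : IntegrableOn S (Ioi 0))
    (htSi : IntegrableOn (fun t => t * S t) (Ioi 0)) :
    Tendsto (adjustmentIntegral s R S) atTop
      (𝓝 ((θ * (∫ t in Ioi 0, S t) + η * ∫ t in Ioi 0, t * S t) / s)) := by
  have h := tendsto_adjustmentIntegral hs hη hR hS hS₀ hSi htSi (eventually_gt_atTop 0)
    fun t ht => tendsto_exp_atTop_of_isOptimalRetention hs hη ht fun ρ hρ => hR ρ hρ t ht
  convert h using 2
  simp_rw [add_sub_cancel_left, div_mul_eq_mul_div, add_mul, mul_assoc, integral_div]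
  rw [integral_add (hSi.const_mul θ) (htSi.const_mul η), integral_const_mul, integral_const_mul]

end AdjustmentIntegral

/-- Proposition 3.1: existence and uniqueness of the maximum adjustment coefficient `ρ_n` of
the `n`-scaled Cramér–Lundberg model, as the unique `ρ > 0` solving
`c − λE[Y] = √n λ ∫₀^∞ (e^{ρ Ř(t;ρ)/√n} − 1) S_Y(t) dt`,
where `Ř(t;ρ) = t` for `0 ≤ t ≤ (√n/ρ) ln(1 + θ/√n)` and otherwise `Ř(t;ρ)` is the unique
`r ∈ [0, t)` with `(√n + θ) + η(t − r) = √n e^{ρr/√n}`. -/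
theorem scaled_adjustment_coefficient_exists_unique
    {Ω : Type*} [MeasurableSpace Ω] (μ : Measure Ω) [IsProbabilityMeasure μ]
    (Y : Ω → ℝ) (hYmeas : Measurable Y) (hYnonneg : ∀ ω, 0 ≤ Y ω)
    (hEY : 0 < ∫ ω, Y ω ∂μ) (hY2 : Integrable (fun ω => (Y ω) ^ 2) μ)
    (n lam θ η c : ℝ) (hn : 0 < n) (hlam : 0 < lam) (hθ : 0 ≤ θ) (hη : 0 < η)
    (hc1 : lam * ∫ ω, Y ω ∂μ < c)
    (hc2 : c < (1 + θ) * lam * (∫ ω, Y ω ∂μ) + (η / 2) * lam * ∫ ω, (Y ω) ^ 2 ∂μ)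
    (Rcheck : ℝ → ℝ → ℝ)
    (hRc1 : ∀ ρ : ℝ, 0 < ρ → ∀ t : ℝ, 0 ≤ t →
      t ≤ Real.sqrt n / ρ * Real.log (1 + θ / Real.sqrt n) → Rcheck t ρ = t)
    (hRc2 : ∀ ρ : ℝ, 0 < ρ → ∀ t : ℝ,
      Real.sqrt n / ρ * Real.log (1 + θ / Real.sqrt n) < t →
      0 ≤ Rcheck t ρ ∧ Rcheck t ρ < t ∧
        (Real.sqrt n + θ) + η * (t - Rcheck t ρ)
          = Real.sqrt n * Real.exp (ρ * Rcheck t ρ / Real.sqrt n)) :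
    ∃! ρ : ℝ, 0 < ρ ∧
      c - lam * ∫ ω, Y ω ∂μ
        = Real.sqrt n * lam * ∫ t in Set.Ioi (0 : ℝ),
            (Real.exp (ρ * Rcheck t ρ / Real.sqrt n) - 1) * (μ {ω | t < Y ω}).toReal := by
  have hs : 0 < √n := sqrt_pos.2 hn
  have hYi : Integrable Y μ :=
    ((memLp_two_iff_integrable_sq hYmeas.aestronglyMeasurable).2 hY2).integrable one_le_two
  obtain ⟨hSi, hS⟩ := integrableOn_measureReal_lt_and_integral_eq hYmeas hYnonneg hYi
  obtain ⟨htSi, htS⟩ := integrableOn_mul_measureReal_lt_and_integral_eq hYmeas hYnonneg hY2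
  have hSm := measurable_measureReal_lt (μ := μ) (X := Y)
  have hS₀ : ∀ t, 0 ≤ μ.real {ω | t < Y ω} := fun _ => measureReal_nonneg
  have hR : ∀ ρ, 0 < ρ → ∀ t, 0 < t → IsOptimalRetention √n θ η ρ t (Rcheck t ρ) :=
    fun ρ hρ t ht => .of_threshold hs hθ hρ ht.le (hRc1 ρ hρ t ht.le) (hRc2 ρ hρ t)
  have h_unique := existsUnique_pos_eq_of_strictMonoOn
    (adjustmentIntegral_strictMonoOn hs hθ hη hR hSm hS₀ hSi htSi (hS ▸ hEY))
    (adjustmentIntegral_continuousOn hs hθ hη hR hSm hS₀ hSi htSi)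
    (tendsto_adjustmentIntegral_nhdsGT_zero hs hη hR hSm hS₀ hSi htSi)
    (tendsto_adjustmentIntegral_atTop hs hη hR hSm hS₀ hSi htSi)
    (d := (c - lam * ∫ ω, Y ω ∂μ) / (√n * lam)) (by apply div_pos <;> nlinarith)
    (by rw [hS, htS, div_lt_div_iff₀ (by positivity) hs]; nlinarith)
  refine (existsUnique_congr fun ρ => and_congr_right fun _ => ?_).2 h_unique
  simp only [← measureReal_def]
  rw [adjustmentIntegral, eq_div_iff (by positivity), eq_comm, mul_comm (√n * lam)]
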